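/- arXiv:1010.4502 — 3 statements merged into one kernel-verified Lean document; each statement's English description precedes it below -/
import Mathlib

section
/- Let a, b ∈ (0,1] with a + b > 1. Let an obstacle square occupy [p, p+b] × [h, h+b] with [p, p+b] ⊆ [0,1]. Let x, y : [0,1] → ℝ be continuous functions describing the motion of a square of side a, such that [x(t), x(t)+a] ⊆ [0,1] for all t, and for every t the open box (x(t), x(t)+a) × (y(t), y(t)+a) is disjoint from the open box (p, p+b) × (h, h+b). If y(0) ≥ h + b, then y(t) ≥ h + b for all t ∈ [0,1]. (A square too wide to fit beside an obstacle in the unit-width strip can never descend past that obstacle.) -/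
/-- A square of side `a` that is too wide to pass beside an obstacle of side `b`
(`a + b > 1`) in the unit-width strip can never descend past the obstacle. -/
theorem no_descent_past_obstacle (a b p h : ℝ)
    (ha0 : 0 < a) (ha1 : a ≤ 1) (hb0 : 0 < b) (hb1 : b ≤ 1) (hab : 1 < a + b)
    (hp0 : 0 ≤ p) (hpb : p + b ≤ 1)
    (x y : ℝ → ℝ)
    (hx : ContinuousOn x (Set.Icc 0 1)) (hy : ContinuousOn y (Set.Icc 0 1))
    (hstrip : ∀ t ∈ Set.Icc (0 : ℝ) 1, 0 ≤ x t ∧ x t + a ≤ 1)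
    (hdisj : ∀ t ∈ Set.Icc (0 : ℝ) 1,
      Disjoint (Set.Ioo (x t) (x t + a) ×ˢ Set.Ioo (y t) (y t + a))
        (Set.Ioo p (p + b) ×ˢ Set.Ioo h (h + b)))
    (h0 : h + b ≤ y 0) :
    ∀ t ∈ Set.Icc (0 : ℝ) 1, h + b ≤ y t := by
  -- At every time, the vertical intervals must be disjoint, giving a dichotomy.
  have key : ∀ t ∈ Set.Icc (0 : ℝ) 1, y t + a ≤ h ∨ h + b ≤ y t := by
    intro t ht
    obtain ⟨hx0, hx1⟩ := hstrip t ht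
    have hu1 : max (x t) p < min (x t + a) (p + b) := by
      apply max_lt <;> apply lt_min <;> linarith
    set v := (max (x t) p + min (x t + a) (p + b)) / 2 with hv
    have hv1 : max (x t) p < v := by rw [hv]; linarith
    have hv2 : v < min (x t + a) (p + b) := by rw [hv]; linarith
    have hvx : x t < v := lt_of_le_of_lt (le_max_left _ _) hv1
    have hvp : p < v := lt_of_le_of_lt (le_max_right _ _) hv1
    have hvx' : v < x t + a := lt_of_lt_of_le hv2 (min_le_left _ _)
    have hvp' : v < p + b := lt_of_lt_of_le hv2 (min_le_right _ _)
    by_contra hcon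
    push_neg at hcon
    obtain ⟨hc1, hc2⟩ := hcon
    have hw1 : max (y t) h < min (y t + a) (h + b) := by
      apply max_lt <;> apply lt_min <;> linarith
    set w := (max (y t) h + min (y t + a) (h + b)) / 2 with hw
    have hw2 : max (y t) h < w := by rw [hw]; linarith
    have hw3 : w < min (y t + a) (h + b) := by rw [hw]; linarith
    have hyw : y t < w := lt_of_le_of_lt (le_max_left _ _) hw2
    have hhw : h < w := lt_of_le_of_lt (le_max_right _ _) hw2
    have hwy : w < y t + a := lt_of_lt_of_le hw3 (min_le_left _ _)
    have hwh : w < h + b := lt_of_lt_of_le hw3 (min_le_right _ _)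
    have hd := hdisj t ht
    rw [Set.disjoint_iff_inter_eq_empty] at hd
    have hmem : ((v, w) : ℝ × ℝ) ∈ (Set.Ioo (x t) (x t + a) ×ˢ Set.Ioo (y t) (y t + a)) ∩
        (Set.Ioo p (p + b) ×ˢ Set.Ioo h (h + b)) :=
      ⟨⟨⟨hvx, hvx'⟩, ⟨hyw, hwy⟩⟩, ⟨⟨hvp, hvp'⟩, ⟨hhw, hwh⟩⟩⟩
    rw [hd] at hmem
    exact hmem
  intro t ht
  by_contra hcon
  push_neg at hcon
  have hyt : y t ≤ h - a := by
    rcases key t ht with h1 | h1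
    · linarith
    · linarith
  obtain ⟨ht0, ht1⟩ := ht
  have hsub : Set.Icc (0 : ℝ) t ⊆ Set.Icc 0 1 := Set.Icc_subset_Icc le_rfl ht1
  have hcont : ContinuousOn y (Set.Icc 0 t) := hy.mono hsub
  have hmem : (h : ℝ) ∈ Set.Icc (y t) (y 0) := ⟨by linarith, by linarith⟩
  obtain ⟨s, hs, hys⟩ := intermediate_value_Icc' ht0 hcont hmem
  rcases key s (hsub hs) with h1 | h1 <;> rw [hys] at h1 <;> linarith
end

section
/- Let 3/4 < a ≤ 1, let H ≥ 0, and let an obstacle square of side 1/4 occupy [q, q+1/4] × [H+1/4, H+1/2] with [q, q+1/4] ⊆ [0,1] (the upper square of a stack of two quarter-squares whose base is at height H). Let x, y : [0,1] → ℝ be continuous with [x(t), x(t)+a] ⊆ [0,1] for all t and with the open box (x(t), x(t)+a) × (y(t), y(t)+a) disjoint from (q, q+1/4) × (H+1/4, H+1/2) for all t. If y(0) ≥ H + 1/2, then y(1) ≥ H + 1/2, and hence the top of the moving square at the end of the motion satisfies y(1) + a ≥ H + 1/2 + a > H + 5/4. (This is the Type-I step of the 5/4 lower-bound construction: a square of side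 3/4 + ε arriving from above two stacked quarter-squares increases the packing height by more than 5/4.) -/
/-- Type-I step of the `5/4` lower-bound construction: a square of side
`a > 3/4` arriving from above the upper square of a stack of two
quarter-squares (base at height `H`) ends with its top above `H + 5/4`. -/
theorem typeI_lower_bound_step (a H q : ℝ)
    (ha : 3 / 4 < a) (ha1 : a ≤ 1) (hH : 0 ≤ H)
    (hq0 : 0 ≤ q) (hq1 : q + 1 / 4 ≤ 1)
    (x y : ℝ → ℝ)
    (hx : ContinuousOn x (Set.Icc 0 1)) (hy : ContinuousOn y (Set.Icc 0 1))
    (hstrip : ∀ t ∈ Set.Icc (0 : ℝ) 1, 0 ≤ x t ∧ x t + a ≤ 1)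
    (hdisj : ∀ t ∈ Set.Icc (0 : ℝ) 1,
      Disjoint (Set.Ioo (x t) (x t + a) ×ˢ Set.Ioo (y t) (y t + a))
        (Set.Ioo q (q + 1 / 4) ×ˢ Set.Ioo (H + 1 / 4) (H + 1 / 2)))
    (h0 : H + 1 / 2 ≤ y 0) :
    H + 1 / 2 ≤ y 1 ∧ H + 5 / 4 < y 1 + a := by
  have key : ∀ t ∈ Set.Icc (0:ℝ) 1, y t + a ≤ H + 1/4 ∨ H + 1/2 ≤ y t := by
    intro t ht
    by_contra hcon
    push_neg at hcon
    obtain ⟨h1, h2⟩ := hcon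
    obtain ⟨hx0, hx1⟩ := hstrip t ht
    have hd := hdisj t ht
    set px := (max (x t) q + min (x t + a) (q + 1/4)) / 2 with hpx
    set py := (max (y t) (H + 1/4) + min (y t + a) (H + 1/2)) / 2 with hpy
    have hxA : max (x t) q < px := by
      have : max (x t) q < min (x t + a) (q + 1/4) := by
        simp only [max_lt_iff, lt_min_iff]
        refine ⟨⟨by linarith, by linarith⟩, ⟨by linarith, by linarith⟩⟩
      simp only [hpx]; linarith
    have hxB : px < min (x t + a) (q + 1/4) := by
      have : max (x t) q < min (x t + a) (q + 1/4) := by linarith [hxA]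
      simp only [hpx]; linarith
    have hyA : max (y t) (H + 1/4) < py := by
      have : max (y t) (H + 1/4) < min (y t + a) (H + 1/2) := by
        simp only [max_lt_iff, lt_min_iff]
        refine ⟨⟨by linarith, by linarith⟩, ⟨by linarith, by linarith⟩⟩
      simp only [hpy]; linarith
    have hyB : py < min (y t + a) (H + 1/2) := by
      have : max (y t) (H + 1/4) < min (y t + a) (H + 1/2) := by linarith [hyA]
      simp only [hpy]; linarith
    have hmem1 : (px, py) ∈ Set.Ioo (x t) (x t + a) ×ˢ Set.Ioo (y t) (y t + a) := by
      refine ⟨⟨?_, ?_⟩, ?_, ?_⟩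
      · exact lt_of_le_of_lt (le_max_left _ _) hxA
      · exact lt_of_lt_of_le hxB (min_le_left _ _)
      · exact lt_of_le_of_lt (le_max_left _ _) hyA
      · exact lt_of_lt_of_le hyB (min_le_left _ _)
    have hmem2 : (px, py) ∈ Set.Ioo q (q + 1/4) ×ˢ Set.Ioo (H + 1/4) (H + 1/2) := by
      refine ⟨⟨?_, ?_⟩, ?_, ?_⟩
      · exact lt_of_le_of_lt (le_max_right _ _) hxA
      · exact lt_of_lt_of_le hxB (min_le_right _ _)
      · exact lt_of_le_of_lt (le_max_right _ _) hyA
      · exact lt_of_lt_of_le hyB (min_le_right _ _)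
    exact Set.disjoint_left.mp hd hmem1 hmem2
  have hy1 : H + 1/2 ≤ y 1 := by
    by_contra h
    push_neg at h
    have hk1 := key 1 (by norm_num)
    have hle : y 1 ≤ H + 1/4 - a := by
      rcases hk1 with h' | h'
      · linarith
      · linarith
    have hsub := intermediate_value_Icc' (by norm_num : (0:ℝ) ≤ 1) hy
    have hc : (H + 3/8) ∈ Set.Icc (y 1) (y 0) := ⟨by linarith, by linarith⟩
    obtain ⟨t, ht, hyt⟩ := hsub hc
    rcases key t ht with h' | h' <;> rw [hyt] at h' <;> linarith
  exact ⟨hy1, by linarith⟩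
end

section
/- Let n ∈ ℕ and let squares be given by side lengths a : Fin n → ℝ with a i > 0 and positions (x i, y i) with x i ≥ 0. Say square j is a left neighbor of square i if x j + a j = x i and the open intervals (y i, y i + a i) and (y j, y j + a j) intersect. Assume that every square i with x i > 0 has a_left neighbor. Then for every index i there exists a finite sequence i = c₀, c₁, …, c_r of indices such that c_{t+1} is a left neighbor of c_t for each t < r and x c_r = 0. (Existence of the left sequence ℒ: every square that cannot be moved further left is connected to the left side of the strip by a chain of touching squares.) -/
/-- Existence of the left sequence: in a packing where every square not
touching the left side of the strip has a left neighbor, every square is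
connected to the left side of the strip by a chain of touching squares. -/
theorem left_sequence_exists (n : ℕ) (a x y : Fin n → ℝ)
    (ha : ∀ i, 0 < a i) (hx : ∀ i, 0 ≤ x i)
    (hsupp : ∀ i, 0 < x i → ∃ j, x j + a j = x i ∧
      (Set.Ioo (y i) (y i + a i) ∩ Set.Ioo (y j) (y j + a j)).Nonempty) :
    ∀ i, ∃ (r : ℕ) (c : ℕ → Fin n), c 0 = i ∧
      (∀ t < r, x (c (t + 1)) + a (c (t + 1)) = x (c t) ∧
        (Set.Ioo (y (c t)) (y (c t) + a (c t)) ∩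
          Set.Ioo (y (c (t + 1))) (y (c (t + 1)) + a (c (t + 1)))).Nonempty) ∧
      x (c r) = 0 := by
  -- measure: number of squares strictly to the left
  set m : Fin n → ℕ := fun i => (Finset.univ.filter (fun k => x k < x i)).card with hm
  suffices H : ∀ N : ℕ, ∀ i, m i ≤ N → ∃ (r : ℕ) (c : ℕ → Fin n), c 0 = i ∧
      (∀ t < r, x (c (t + 1)) + a (c (t + 1)) = x (c t) ∧
        (Set.Ioo (y (c t)) (y (c t) + a (c t)) ∩
          Set.Ioo (y (c (t + 1))) (y (c (t + 1)) + a (c (t + 1)))).Nonempty) ∧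
      x (c r) = 0 by
    intro i; exact H (m i) i le_rfl
  intro N
  induction N with
  | zero =>
    intro i hi
    refine ⟨0, fun _ => i, rfl, by omega, ?_⟩
    rcases eq_or_lt_of_le (hx i) with h | h
    · exact h.symm
    · exfalso
      obtain ⟨j, hj, _⟩ := hsupp i h
      have hjlt : x j < x i := by have := ha j; linarith
      have : j ∈ Finset.univ.filter (fun k => x k < x i) := by
        simp [hjlt]
      have : 0 < m i := Finset.card_pos.mpr ⟨j, this⟩
      omega
  | succ N ih =>
    intro i hi
    rcases eq_or_lt_of_le (hx i) with h | h
    · exact ⟨0, fun _ => i, rfl, by omega, h.symm⟩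
    · obtain ⟨j, hj, hjy⟩ := hsupp i h
      have hjlt : x j < x i := by have := ha j; linarith
      have hmj : m j < m i := by
        apply Finset.card_lt_card
        constructor
        · intro k hk
          simp only [Finset.mem_filter, Finset.mem_univ, true_and] at hk ⊢
          linarith
        · intro hsub
          have := hsub (by simp [hjlt] : j ∈ Finset.univ.filter (fun k => x k < x i))
          simp at this
      obtain ⟨r, c, hc0, hcchain, hcr⟩ := ih j (by omega)
      refine ⟨r + 1, fun t => if t = 0 then i else c (t - 1), by simp, ?_, by simp [hcr]⟩
      intro t ht
      rcases Nat.eq_zero_or_pos t with rfl | htpos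
      · simpa [hc0] using ⟨hj, hjy⟩
      · have h1 : ¬ (t = 0) := by omega
        have h2 : ¬ (t + 1 = 0) := by omega
        simp only [h1, h2, if_false]
        have : t - 1 < r := by omega
        have := hcchain (t - 1) this
        have heq : t - 1 + 1 = t := by omega
        rw [heq] at this
        have heq2 : t + 1 - 1 = t := by omega
        rw [heq2]
        exact this
end
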